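/- arXiv:2211.15256 — 3 statements merged into one kernel-verified Lean document; each statement's English description precedes it below -/
import Mathlib

section
/- Let φ(x,t) := t^{p(x)} with a variable exponent p: Ω → [1,∞). Then φ satisfies the restricted (VA1) condition if and only if 1/p is strongly log-Hölder continuous, i.e. 1/p is log-Hölder continuous and lim_{x→y} |1 − 1/p(x)| · log(1/|x−y|) = 0 uniformly in y ∈ {p = 1}. -/
open MeasureTheory Filter Set Topology Metric
open scoped ENNReal NNReal

noncomputable section

/-- Euclidean space `ℝⁿ`. -/
abbrev Euc (n : ℕ) := EuclideanSpace ℝ (Fin n)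

variable {n : ℕ}

/-- The divergence of a vector field on `ℝⁿ`. -/
def divg (w : Euc n → Euc n) (x : Euc n) : ℝ :=
  ∑ i, fderiv ℝ w x (EuclideanSpace.single i 1) i

/-- `C¹` vector fields with compact support contained in `Ω`. -/
def IsTestField (Ω : Set (Euc n)) (w : Euc n → Euc n) : Prop :=
  ContDiff ℝ 1 w ∧ HasCompactSupport w ∧ tsupport w ⊆ Ω

/-- `Ω` is a bounded domain. -/
def IsBoundedDomain (Ω : Set (Euc n)) : Prop :=
  IsOpen Ω ∧ IsConnected Ω ∧ Bornology.IsBounded Ω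

/-- The modular `ρ_φ(f) = ∫_Ω φ(x,|f(x)|) dx` for scalar functions. -/
def modular (Ω : Set (Euc n)) (φ : Euc n → ℝ → ℝ≥0∞) (f : Euc n → ℝ) : ℝ≥0∞ :=
  ∫⁻ x in Ω, φ x |f x|

/-- The modular `ρ_φ(|w|) = ∫_Ω φ(x,|w(x)|) dx` for vector-valued functions. -/
def vmodular (Ω : Set (Euc n)) (φ : Euc n → ℝ → ℝ≥0∞) (w : Euc n → Euc n) : ℝ≥0∞ :=
  ∫⁻ x in Ω, φ x ‖w x‖

/-- The conjugate Φ-function `φ*(x,t) = sup_{s ≥ 0} (st − φ(x,s))`. -/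
def conj (φ : Euc n → ℝ → ℝ≥0∞) (x : Euc n) (t : ℝ) : ℝ≥0∞ :=
  ⨆ s : {s : ℝ // 0 ≤ s}, ENNReal.ofReal ((s : ℝ) * t) - φ x (s : ℝ)

/-- The Luxemburg (quasi)norm of a scalar function. -/
def luxNorm (Ω : Set (Euc n)) (φ : Euc n → ℝ → ℝ≥0∞) (f : Euc n → ℝ) : ℝ≥0∞ :=
  ⨅ l ∈ {l : ℝ | 0 < l ∧ modular Ω φ (fun x => f x / l) ≤ 1}, ENNReal.ofReal l

/-- The Luxemburg (quasi)norm of a vector-valued function. -/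
def luxNormV (Ω : Set (Euc n)) (φ : Euc n → ℝ → ℝ≥0∞) (w : Euc n → Euc n) : ℝ≥0∞ :=
  ⨅ l ∈ {l : ℝ | 0 < l ∧ vmodular Ω φ (fun x => (l⁻¹ : ℝ) • w x) ≤ 1}, ENNReal.ofReal l

/-- The dual norm `V_φ(u)`. -/
def Vphi (Ω : Set (Euc n)) (φ : Euc n → ℝ → ℝ≥0∞) (u : Euc n → ℝ) : ℝ≥0∞ :=
  ⨆ w ∈ {w : Euc n → Euc n | IsTestField Ω w ∧ luxNormV Ω (conj φ) w ≤ 1},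
    ENNReal.ofReal (∫ x in Ω, u x * divg w x)

/-- The dual modular `ρ_{V,φ}(u)`. -/
def rhoV (Ω : Set (Euc n)) (φ : Euc n → ℝ → ℝ≥0∞) (u : Euc n → ℝ) : ℝ≥0∞ :=
  ⨆ w ∈ {w : Euc n → Euc n | IsTestField Ω w},
    (ENNReal.ofReal (∫ x in Ω, u x * divg w x) - vmodular Ω (conj φ) w)

/-- The recession function `φ'_∞(x) = limsup_{t→∞} φ(x,t)/t`. -/
def recession (φ : Euc n → ℝ → ℝ≥0∞) (x : Euc n) : ℝ≥0∞ :=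
  Filter.limsup (fun t : ℝ => φ x t / ENNReal.ofReal t) Filter.atTop

/-- `φ` is a weak Φ-function on `Ω`. -/
structure IsWeakPhi (Ω : Set (Euc n)) (φ : Euc n → ℝ → ℝ≥0∞) : Prop where
  meas : ∀ f : Euc n → ℝ, Measurable f → Measurable fun x => φ x |f x|
  mono : ∀ x ∈ Ω, ∀ s t : ℝ, 0 ≤ s → s ≤ t → φ x s ≤ φ x t
  zero : ∀ x ∈ Ω, φ x 0 = 0
  lim_zero : ∀ x ∈ Ω, Tendsto (φ x) (𝓝[>] (0 : ℝ)) (𝓝 0)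
  lim_top : ∀ x ∈ Ω, Tendsto (φ x) atTop (𝓝 ∞)
  aInc1 : ∃ L : ℝ≥0∞, 1 ≤ L ∧ ∀ x ∈ Ω, ∀ s t : ℝ, 0 < s → s ≤ t →
    φ x s / ENNReal.ofReal s ≤ L * (φ x t / ENNReal.ofReal t)

/-- `φ` is a convex Φ-function on `Ω`. -/
structure IsConvexPhi (Ω : Set (Euc n)) (φ : Euc n → ℝ → ℝ≥0∞)
    extends IsWeakPhi Ω φ : Prop where
  convex : ∀ x ∈ Ω, ∀ a b θ : ℝ, 0 ≤ a → 0 ≤ b → θ ∈ Icc (0 : ℝ) 1 →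
    φ x (θ * a + (1 - θ) * b) ≤ ENNReal.ofReal θ * φ x a + ENNReal.ofReal (1 - θ) * φ x b
  left_cont : ∀ x ∈ Ω, ∀ t : ℝ, 0 < t → Tendsto (φ x) (𝓝[<] t) (𝓝 (φ x t))

/-- The condition (A0). -/
def A0 (Ω : Set (Euc n)) (φ : Euc n → ℝ → ℝ≥0∞) : Prop :=
  ∃ β : ℝ, 0 < β ∧ β ≤ 1 ∧ ∀ x ∈ Ω, φ x β ≤ 1 ∧ 1 ≤ φ x β⁻¹

/-- The condition (A1). -/
def A1 (Ω : Set (Euc n)) (φ : Euc n → ℝ → ℝ≥0∞) : Prop :=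
  ∀ K : ℝ, 0 < K → ∃ β : ℝ, 0 < β ∧ β ≤ 1 ∧
    ∀ x ∈ Ω, ∀ y ∈ Ω, ∀ t : ℝ, 0 ≤ t →
      φ y t ≤ ENNReal.ofReal K / ENNReal.ofReal (dist x y ^ n) →
      φ x (β * t) ≤ φ y t + 1

/-- `ω` is a modulus of continuity. -/
def IsModulus (ω : ℝ → ℝ≥0∞) : Prop :=
  (∀ s t : ℝ, 0 ≤ s → s ≤ t → ω s ≤ ω t) ∧ ω 0 = 0 ∧ Tendsto ω (𝓝[>] (0 : ℝ)) (𝓝 0)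

/-- The (VA1) inequality for a given constant `K` and modulus of continuity `ω`. -/
def VA1With (Ω : Set (Euc n)) (φ : Euc n → ℝ → ℝ≥0∞) (K : ℝ) (ω : ℝ → ℝ≥0∞) : Prop :=
  ∀ x ∈ Ω, ∀ y ∈ Ω, ∀ t : ℝ, 0 ≤ t →
    φ y t ≤ ENNReal.ofReal K / ENNReal.ofReal (dist x y ^ n) →
    φ x (t * ((1 + ω (dist x y))⁻¹).toReal) ≤ φ y t + ω (dist x y)

/-- The condition (VA1). -/
def VA1 (Ω : Set (Euc n)) (φ : Euc n → ℝ → ℝ≥0∞) : Prop :=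
  ∀ K : ℝ, 0 < K → ∃ ω : ℝ → ℝ≥0∞, IsModulus ω ∧ VA1With Ω φ K ω

/-- The restricted (VA1) condition: (A1) together with the (VA1) inequality whenever
one of the two points has finite recession function. -/
def RestrictedVA1 (Ω : Set (Euc n)) (φ : Euc n → ℝ → ℝ≥0∞) : Prop :=
  A1 Ω φ ∧ ∀ K : ℝ, 0 < K → ∃ ω : ℝ → ℝ≥0∞, IsModulus ω ∧
    ∀ x ∈ Ω, ∀ y ∈ Ω, (recession φ x < ∞ ∨ recession φ y < ∞) →
      ∀ t : ℝ, 0 ≤ t →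
        φ y t ≤ ENNReal.ofReal K / ENNReal.ofReal (dist x y ^ n) →
        φ x (t * ((1 + ω (dist x y))⁻¹).toReal) ≤ φ y t + ω (dist x y)

/-- The condition (aDec)_q. -/
def aDecAt (Ω : Set (Euc n)) (φ : Euc n → ℝ → ℝ≥0∞) (q : ℝ) : Prop :=
  ∃ L : ℝ≥0∞, 1 ≤ L ∧ ∀ x ∈ Ω, ∀ s t : ℝ, 0 < s → s ≤ t →
    φ x t / ENNReal.ofReal (t ^ q) ≤ L * (φ x s / ENNReal.ofReal (s ^ q))

/-- The condition (aDec): (aDec)_q for some finite `q`. -/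
def aDec (Ω : Set (Euc n)) (φ : Euc n → ℝ → ℝ≥0∞) : Prop :=
  ∃ q : ℝ, aDecAt Ω φ q

/-- Membership in the generalized Orlicz space `L^φ(Ω)`. -/
def MemLphi (Ω : Set (Euc n)) (φ : Euc n → ℝ → ℝ≥0∞) (u : Euc n → ℝ) : Prop :=
  Measurable u ∧ ∃ l : ℝ, 0 < l ∧ modular Ω φ (fun x => l * u x) < ∞

/-- Membership in `BV^φ(Ω)`. -/
def MemBVphi (Ω : Set (Euc n)) (φ : Euc n → ℝ → ℝ≥0∞) (u : Euc n → ℝ) : Prop :=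
  MemLphi Ω φ u ∧ Integrable u (volume.restrict Ω) ∧
    luxNorm Ω φ u + Vphi Ω φ u < ∞

/-- `g` is the distributional (weak) gradient of `u` in `Ω`. -/
def HasWeakGradientOn (Ω : Set (Euc n)) (u : Euc n → ℝ) (g : Euc n → Euc n) : Prop :=
  ∀ w : Euc n → Euc n, IsTestField Ω w →
    ∫ x in Ω, u x * divg w x = -∫ x in Ω, (inner ℝ (g x) (w x) : ℝ)

/-- A decomposition `Du = ∇ᵃu·dx + σ·dν` of the derivative measure of a BV function `u`,
where `ν = |Dˢu|` is the total variation of the singular part and `σ` its polar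
(a unit vector field `ν`-a.e.). -/
def IsBVDecomp (Ω : Set (Euc n)) (u : Euc n → ℝ) (ga : Euc n → Euc n)
    (ν : Measure (Euc n)) (σ : Euc n → Euc n) : Prop :=
  Integrable u (volume.restrict Ω) ∧
  Integrable ga (volume.restrict Ω) ∧
  IsFiniteMeasure ν ∧ ν Ωᶜ = 0 ∧ Measure.MutuallySingular ν volume ∧
  (∀ᵐ x ∂ν, ‖σ x‖ = 1) ∧
  (∀ w : Euc n → Euc n, IsTestField Ω w →
    ∫ x in Ω, u x * divg w x =
      -((∫ x in Ω, (inner ℝ (ga x) (w x) : ℝ)) + ∫ x, (inner ℝ (σ x) (w x) : ℝ) ∂ν))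

/-!
For `φ(x,t) = t^{p(x)}` the recession function is finite exactly where `p = 1`, so restricted
(VA1) only constrains pairs of points with `p = 1` at one end. Testing (A1) at the `t` with
`t^{p(y)} = 1/|x-y|` gives `(1/p(y) - 1/p(x)) log(1/|x-y|) ≤ log 2 + log(1/β)`, i.e. log-Hölder
continuity of `1/p`; testing (VA1) at a point `y` with `p(y) = 1` and `t = 1/|x-y|` gives
`(1 - 1/p(x)) log(1/|x-y|) ≤ 2 ω(|x-y|)`, the uniform decay.

Conversely, log-Hölder continuity yields (A1) with `β = exp(-C (max(log K, 0) + n))`: when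
`p(y) < p(x)` and `t > 1`, the bound `t^{p(y)} ≤ K/|x-y|ⁿ` turns
`1/p(y) - 1/p(x) ≲ 1/log(1/|x-y|)` into `t^{p(x)-p(y)} ≤ β^{-p(x)}`. For (VA1), the decay
makes the defect `exp((max(p x, p y) - 1)(1 + |log(K/|x-y|ⁿ)|)) - 1` tend to `0` uniformly over
pairs with `p = 1` at one end, and its supremum over such pairs at distance `≤ r` is the modulus
of continuity.
-/

open Real

namespace ENNReal

lemma ofReal_le_ofReal_add_iff_of_ne_top {x y : ℝ} {a : ℝ≥0∞} (hy : 0 ≤ y) (ha : a ≠ ∞) :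
    ENNReal.ofReal x ≤ ENNReal.ofReal y + a ↔ x ≤ y + a.toReal := by
  conv_lhs => rw [← ofReal_toReal ha]
  rw [← ofReal_add hy toReal_nonneg, ofReal_le_ofReal_iff (by positivity)]

lemma ofReal_le_ofReal_div_iff {x K b : ℝ} (hK : 0 ≤ K) (hb : 0 < b) :
    ENNReal.ofReal x ≤ ENNReal.ofReal K / ENNReal.ofReal b ↔ x ≤ K / b := by
  rw [← ofReal_div_of_pos hb, ofReal_le_ofReal_iff (div_nonneg hK hb.le)]

lemma toReal_inv_one_add {a : ℝ≥0∞} (ha : a ≠ ∞) : ((1 + a)⁻¹).toReal = (1 + a.toReal)⁻¹ := by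
  rw [toReal_inv, toReal_add one_ne_top ha, toReal_one]

end ENNReal

lemma ofReal_one_div_le_one_div_pow {d : ℝ} {m : ℕ} (hd : 0 < d) (hd1 : d ≤ 1) (hm : m ≠ 0) :
    ENNReal.ofReal (1 / d) ≤ ENNReal.ofReal 1 / ENNReal.ofReal (d ^ m) := by
  rw [ENNReal.ofReal_le_ofReal_div_iff zero_le_one (pow_pos hd m)]
  exact one_div_le_one_div_of_le (pow_pos hd m) (pow_le_of_le_one hd.le hd1 hm)

lemma one_le_log_exp_one_add {d : ℝ} (hd : 0 ≤ d) : 1 ≤ log (exp 1 + 1 / d) := by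
  refine (log_exp 1).symm.le.trans ?_
  exact log_le_log (exp_pos 1) (le_add_of_nonneg_right (by positivity : (0 : ℝ) ≤ 1 / d))

lemma log_exp_one_add_le {d : ℝ} (hd : 0 < d) (hd1 : d ≤ 1) :
    log (exp 1 + 1 / d) ≤ 2 + log (1 / d) := by
  have he : 2 ≤ exp 1 := by linarith [add_one_le_exp 1]
  have hle : exp 1 + 1 / d ≤ exp 2 * (1 / d) := by
    rw [show (2 : ℝ) = 1 + 1 by norm_num, exp_add]
    have hu : 1 ≤ 1 / d := by rw [le_div_iff₀ hd]; linarith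
    nlinarith [mul_nonneg (sub_nonneg.2 hu) (by nlinarith : (0 : ℝ) ≤ exp 1 * exp 1 - 1)]
  calc log (exp 1 + 1 / d) ≤ log (exp 2 * (1 / d)) := log_le_log (by positivity) hle
    _ = 2 + log (1 / d) := by rw [log_mul (exp_pos 2).ne' (by positivity), log_exp]

lemma mul_log_exp_one_add_le {a c d : ℝ} (ha : a ≤ 1) (hd : 0 < d) (hc : 0 ≤ c)
    (h : d ≤ 1 → a * log (1 / d) ≤ c) : a * log (exp 1 + 1 / d) ≤ 2 + c := by
  rcases le_or_gt a 0 with ha0 | ha0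
  · nlinarith [one_le_log_exp_one_add hd.le]
  rcases le_or_gt d 1 with hd1 | hd1
  · nlinarith [log_exp_one_add_le hd hd1, h hd1]
  · have hE : log (exp 1 + 1 / d) ≤ 2 := by
      calc log (exp 1 + 1 / d) ≤ log (exp 1 + 1 / 1) := by
            gcongr
          _ ≤ 2 + log (1 / 1) := log_exp_one_add_le one_pos le_rfl
          _ = 2 := by simp
    nlinarith

lemma inv_sub_inv_mul_log_le {a b β s : ℝ} (ha : 1 ≤ a) (hb : 1 ≤ b) (hβ0 : 0 < β)
    (hβ1 : β ≤ 1) (hs : 1 ≤ s) (h : (β * s ^ b⁻¹) ^ a ≤ s + 1) :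
    (1 / b - 1 / a) * log s ≤ log 2 + log β⁻¹ := by
  have hs0 : 0 < s := by linarith
  have hlog : a * (log β + b⁻¹ * log s) ≤ log 2 + log s := by
    have h2 : (β * s ^ b⁻¹) ^ a ≤ 2 * s := by linarith
    have := log_le_log (by positivity) h2
    rwa [log_rpow (by positivity), log_mul hβ0.ne' (by positivity), log_rpow hs0,
      log_mul two_ne_zero hs0.ne'] at this
  have hB : 0 ≤ log β⁻¹ := log_nonneg (one_le_inv_iff₀.mpr ⟨hβ0, hβ1⟩)
  have hl2 : 0 ≤ log 2 := log_nonneg one_le_two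
  have hls : 0 ≤ log s := log_nonneg hs
  rw [log_inv] at hB ⊢
  have key : a * ((1 / b - 1 / a) * log s) ≤ a * (log 2 - log β) := by
    have e : a * ((1 / b - 1 / a) * log s) = a * (b⁻¹ * log s) - log s := by
      field_simp
    nlinarith
  exact le_of_mul_le_mul_left key (by linarith)

lemma one_sub_inv_mul_log_le {q w s : ℝ} (hq : 1 ≤ q) (hw : 0 ≤ w) (hs : 1 ≤ s)
    (h : (s * (1 + w)⁻¹) ^ q ≤ s + w) : (1 - 1 / q) * log s ≤ 2 * w := by
  have hs0 : 0 < s := by linarith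
  have hw1 : 0 < 1 + w := by linarith
  have hlog : q * (log s - log (1 + w)) ≤ log s + log (1 + w) := by
    have h2 : (s * (1 + w)⁻¹) ^ q ≤ s * (1 + w) := by nlinarith
    have := log_le_log (by positivity) h2
    rwa [log_rpow (by positivity), log_mul hs0.ne' (by positivity), log_inv,
      log_mul hs0.ne' hw1.ne', ← sub_eq_add_neg] at this
  have hz0 : 0 ≤ log (1 + w) := log_nonneg (by linarith)
  have hzw : log (1 + w) ≤ w := by linarith [log_le_sub_one_of_pos hw1]
  have key : q * ((1 - 1 / q) * log s) ≤ q * (2 * w) := by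
    have e : q * ((1 - 1 / q) * log s) = (q - 1) * log s := by field_simp
    nlinarith
  exact le_of_mul_le_mul_left key (by linarith)

lemma rpow_le_rpow_add_one_of_log_le {β t a b : ℝ} (hβ0 : 0 < β) (hβ1 : β ≤ 1) (ht : 0 ≤ t)
    (ha : 1 ≤ a) (h : 1 < t → a * log (β * t) ≤ b * log t) : (β * t) ^ a ≤ t ^ b + 1 := by
  rcases le_or_gt t 1 with ht1 | ht1
  · have : (β * t) ^ a ≤ 1 :=
      rpow_le_one (by positivity) (mul_le_one₀ hβ1 ht ht1) (by linarith)
    linarith [rpow_nonneg ht b]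
  · have hle : (β * t) ^ a ≤ t ^ b := by
      rw [rpow_def_of_pos (by positivity), rpow_def_of_pos (by linarith)]
      exact exp_le_exp.mpr (by linarith [h ht1])
    linarith

lemma log_div_pow_eq {K d : ℝ} (hK : 0 < K) (hd : 0 < d) (n : ℕ) :
    log (K / d ^ n) = log K + n * log (1 / d) := by
  rw [log_div hK.ne' (by positivity), log_pow, one_div, log_inv]
  ring

lemma log_div_pow_le {K d : ℝ} (hK : 0 < K) (hd : 0 < d) (n : ℕ) :
    log (K / d ^ n) ≤ (max (log K) 0 + n) * log (exp 1 + 1 / d) := by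
  have hE := one_le_log_exp_one_add hd.le
  have hL : log (1 / d) ≤ log (exp 1 + 1 / d) :=
    log_le_log (by positivity) (le_add_of_nonneg_left (exp_pos 1).le)
  rw [log_div_pow_eq hK hd]
  nlinarith [le_max_left (log K) 0, le_max_right (log K) 0, (n.cast_nonneg : (0 : ℝ) ≤ n)]

lemma sub_mul_le_of_inv_sub_inv_le {a b C E m ℓ : ℝ} (ha : 1 ≤ a) (hb : 1 ≤ b) (hC : 0 ≤ C)
    (hE : 0 < E) (hab : 1 / b - 1 / a ≤ C / E) (hℓ : 0 ≤ ℓ) (hbℓ : b * ℓ ≤ m * E) :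
    (a - b) * ℓ ≤ a * (C * m) := by
  have hm : 0 ≤ m := nonneg_of_mul_nonneg_left ((by positivity : 0 ≤ b * ℓ).trans hbℓ) hE
  rcases le_or_gt a b with hle | hlt
  · nlinarith [mul_nonneg hC hm]
  have hab0 : 0 ≤ 1 / b - 1 / a := sub_nonneg.2 (one_div_le_one_div_of_le (by linarith) hlt.le)
  calc (a - b) * ℓ = a * ((1 / b - 1 / a) * (b * ℓ)) := by field_simp
    _ ≤ a * (C / E * (m * E)) := by gcongr
    _ = a * (C * m) := by field_simp

lemma le_rpow_add_sub_one {t q : ℝ} (ht : 0 ≤ t) (hq : 1 ≤ q) : t ≤ t ^ q + (q - 1) := by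
  have := one_add_mul_self_le_rpow_one_add (s := t - 1) (by linarith) hq
  rw [add_sub_cancel] at this
  nlinarith

lemma mul_inv_one_add_le_rpow_add {t b w : ℝ} (ht : 0 ≤ t) (hb : 1 ≤ b) (hw : b - 1 ≤ w) :
    t * (1 + w)⁻¹ ≤ t ^ b + w := by
  have : t * (1 + w)⁻¹ ≤ t := mul_le_of_le_one_right ht (inv_le_one_of_one_le₀ (by linarith))
  linarith [le_rpow_add_sub_one ht hb]

lemma rpow_mul_inv_one_add_le_add {t T a w : ℝ} (ht : 0 ≤ t) (htT : t ≤ T) (ha : 1 ≤ a)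
    (hw : 0 ≤ w) (hTw : T ^ (a - 1) ≤ 1 + w) : (t * (1 + w)⁻¹) ^ a ≤ t + w := by
  have hw1 : 0 < 1 + w := by linarith
  have hinv : t * (1 + w)⁻¹ ≤ t := mul_le_of_le_one_right ht (inv_le_one_of_one_le₀ (by linarith))
  rcases le_or_gt t 1 with ht1 | ht1
  · linarith [rpow_le_self_of_le_one (by positivity) (hinv.trans ht1) ha]
  have ht0 : 0 < t := by linarith
  have hta : t ^ a ≤ t * (1 + w) ^ a :=
    calc t ^ a = t * t ^ (a - 1) := by
          rw [← rpow_one_add' ht0.le (by linarith)]; ring_nf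
      _ ≤ t * T ^ (a - 1) := by gcongr
      _ ≤ t * (1 + w) := by gcongr
      _ ≤ t * (1 + w) ^ a := by gcongr; exact self_le_rpow_of_one_le (by linarith) ha
  rw [mul_rpow ht (by positivity), inv_rpow hw1.le, ← div_eq_mul_inv,
    div_le_iff₀ (by positivity)]
  nlinarith [rpow_pos_of_pos hw1 a]

lemma rpow_mul_inv_one_add_le_of_exp_le {t T a b w : ℝ} (ha : 1 ≤ a) (hb : 1 ≤ b)
    (hab : a = 1 ∨ b = 1) (hT : 0 < T) (ht : 0 ≤ t) (htT : t ^ b ≤ T)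
    (hw : exp ((max a b - 1) * (1 + |log T|)) - 1 ≤ w) :
    (t * (1 + w)⁻¹) ^ a ≤ t ^ b + w := by
  rcases hab with rfl | rfl
  · rw [max_eq_right hb] at hw
    rw [rpow_one]
    refine mul_inv_one_add_le_rpow_add ht hb ?_
    calc b - 1 ≤ exp (b - 1) - 1 := by linarith [add_one_le_exp (b - 1)]
      _ ≤ exp ((b - 1) * (1 + |log T|)) - 1 := by
        gcongr; exact le_mul_of_one_le_right (by linarith) (by linarith [abs_nonneg (log T)])
      _ ≤ w := hw
  · rw [max_eq_left ha] at hw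
    rw [rpow_one] at htT ⊢
    have hw0 : 0 ≤ w := by
      refine le_trans ?_ hw
      linarith [one_le_exp (by positivity : 0 ≤ (a - 1) * (1 + |log T|))]
    refine rpow_mul_inv_one_add_le_add ht htT ha hw0 ?_
    calc T ^ (a - 1) = exp (log T * (a - 1)) := rpow_def_of_pos hT _
      _ ≤ exp ((a - 1) * (1 + |log T|)) :=
        exp_le_exp.mpr (by nlinarith [le_abs_self (log T)])
      _ ≤ 1 + w := by linarith

lemma sub_one_mul_le_two_mul {q L η : ℝ} (hq : 1 ≤ q) (hL : 1 ≤ L) (h : (1 - 1 / q) * L < η)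
    (hη : η ≤ 1 / 2) : (q - 1) * L ≤ 2 * η := by
  have hq0 : 0 < q := by linarith
  have hq2 : q ≤ 2 := by
    have h1 : 1 - 1 / q ≤ 1 / 2 := by
      nlinarith [mul_le_mul_of_nonneg_left hL (sub_nonneg.2 (div_le_one_of_le₀ hq hq0.le))]
    rw [sub_le_comm, le_div_iff₀ hq0] at h1
    linarith
  calc (q - 1) * L = q * ((1 - 1 / q) * L) := by field_simp
    _ ≤ 2 * η := by
      have : 0 ≤ (1 - 1 / q) * L :=
        mul_nonneg (sub_nonneg.2 (div_le_one_of_le₀ hq hq0.le)) (by linarith)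
      nlinarith

lemma one_add_abs_log_div_pow_le {K d : ℝ} (hK : 0 < K) (hd : 0 < d) (hL : 1 ≤ log (1 / d))
    (n : ℕ) : 1 + |log (K / d ^ n)| ≤ (1 + |log K| + n) * log (1 / d) := by
  have habs : |log (K / d ^ n)| ≤ |log K| + n * log (1 / d) := by
    rw [log_div_pow_eq hK hd]
    refine (abs_add_le _ _).trans_eq ?_
    rw [abs_of_nonneg (mul_nonneg n.cast_nonneg (by linarith : (0 : ℝ) ≤ log (1 / d)))]
  nlinarith [abs_nonneg (log K), (n.cast_nonneg : (0 : ℝ) ≤ n)]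

lemma isModulus_biSup_ofReal {ι : Type*} (S : Set ι) (D g : ι → ℝ) (hD : ∀ i ∈ S, 0 < D i)
    (hg : ∀ ε > 0, ∃ δ > 0, ∀ i ∈ S, D i < δ → g i ≤ ε) :
    IsModulus fun r => ⨆ i ∈ {i ∈ S | D i ≤ r}, ENNReal.ofReal (g i) := by
  refine ⟨fun s t _ hst => biSup_mono fun i hi => ⟨hi.1, hi.2.trans hst⟩, ?_, ?_⟩
  · exact le_antisymm (iSup₂_le fun i hi => absurd hi.2 (not_le.mpr (hD i hi.1))) zero_le
  · rw [ENNReal.tendsto_nhds_zero]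
    intro ε hε
    obtain ⟨r, -, hr0, hrε⟩ := ENNReal.lt_iff_exists_real_btwn.mp hε
    obtain ⟨δ, hδ, hgδ⟩ := hg r (ENNReal.ofReal_pos.mp hr0)
    filter_upwards [Ioo_mem_nhdsGT hδ] with s hs
    exact iSup₂_le fun i hi =>
      (ENNReal.ofReal_le_ofReal (hgδ i hi.1 (hi.2.trans_lt hs.2))).trans hrε.le

def varPow (p : Euc n → ℝ) (x : Euc n) (t : ℝ) : ℝ≥0∞ := ENNReal.ofReal (t ^ p x)

def IsLogHolderOn (Ω : Set (Euc n)) (f : Euc n → ℝ) : Prop :=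
  ∃ C : ℝ, 0 ≤ C ∧ ∀ x ∈ Ω, ∀ y ∈ Ω, |f x - f y| ≤ C / log (exp 1 + 1 / dist x y)

def IsLogVanishingAtOne (Ω : Set (Euc n)) (p : Euc n → ℝ) : Prop :=
  ∀ ε : ℝ, 0 < ε → ∃ δ : ℝ, 0 < δ ∧ ∀ y ∈ Ω, p y = 1 → ∀ x ∈ Ω,
    0 < dist x y → dist x y < δ → |1 - 1 / p x| * log (1 / dist x y) < ε

def RestrictedVA1With (Ω : Set (Euc n)) (φ : Euc n → ℝ → ℝ≥0∞) (K : ℝ) (ω : ℝ → ℝ≥0∞) :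
    Prop :=
  ∀ x ∈ Ω, ∀ y ∈ Ω, (recession φ x < ∞ ∨ recession φ y < ∞) → ∀ t : ℝ, 0 ≤ t →
    φ y t ≤ ENNReal.ofReal K / ENNReal.ofReal (dist x y ^ n) →
    φ x (t * ((1 + ω (dist x y))⁻¹).toReal) ≤ φ y t + ω (dist x y)

section VarPow

variable {Ω : Set (Euc n)} {p : Euc n → ℝ}

lemma recession_varPow_of_eq_one {x : Euc n} (h : p x = 1) : recession (varPow p) x = 1 := by
  rw [recession, ← limsup_const (f := (atTop : Filter ℝ)) (1 : ℝ≥0∞)]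
  refine limsup_congr ?_
  filter_upwards [eventually_gt_atTop (0 : ℝ)] with t ht
  rw [varPow, h, rpow_one, ENNReal.div_self (by simp [ht]) ENNReal.ofReal_ne_top]

lemma recession_varPow_of_one_lt {x : Euc n} (h : 1 < p x) : recession (varPow p) x = ∞ := by
  refine Tendsto.limsup_eq ?_
  have hpow : Tendsto (fun t : ℝ => ENNReal.ofReal (t ^ (p x - 1))) atTop (𝓝 ∞) :=
    ENNReal.tendsto_ofReal_atTop.comp (tendsto_rpow_atTop (by linarith))
  refine hpow.congr' ?_
  filter_upwards [eventually_gt_atTop (0 : ℝ)] with t ht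
  rw [varPow, ← ENNReal.ofReal_div_of_pos ht, rpow_sub ht, rpow_one]

lemma recession_varPow_lt_top_iff {x : Euc n} (h : 1 ≤ p x) :
    recession (varPow p) x < ∞ ↔ p x = 1 := by
  refine ⟨fun hlt => ?_, fun h1 => by simp [recession_varPow_of_eq_one h1]⟩
  by_contra hne
  exact (recession_varPow_of_one_lt (lt_of_le_of_ne h (Ne.symm hne))).not_lt hlt

lemma isLogHolderOn_inv_of_A1 (hp : ∀ x ∈ Ω, 1 ≤ p x) (hA1 : A1 Ω (varPow p)) :
    IsLogHolderOn Ω fun x => 1 / p x := by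
  obtain ⟨β, hβ0, hβ1, hβ⟩ := hA1 1 one_pos
  have hc : 0 ≤ log 2 + log β⁻¹ :=
    add_nonneg (log_nonneg one_le_two) (log_nonneg (one_le_inv_iff₀.mpr ⟨hβ0, hβ1⟩))
  have hE : ∀ x y : Euc n, 0 < log (exp 1 + 1 / dist x y) := fun x y =>
    one_pos.trans_le (one_le_log_exp_one_add dist_nonneg)
  have key : ∀ x ∈ Ω, ∀ y ∈ Ω,
      1 / p y - 1 / p x ≤ (2 + (log 2 + log β⁻¹)) / log (exp 1 + 1 / dist x y) := by
    intro x hx y hy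
    rcases eq_or_ne x y with rfl | hxy
    · rw [sub_self]; exact div_nonneg (by positivity) (hE x x).le
    have hn : n ≠ 0 := by rintro rfl; exact hxy (Subsingleton.elim x y)
    have hd : 0 < dist x y := dist_pos.mpr hxy
    have hpx := hp x hx
    have hpy := hp y hy
    rw [le_div_iff₀ (hE x y)]
    refine mul_log_exp_one_add_le ?_ hd hc fun hd1 => ?_
    · linarith [one_div_le_one_div_of_le zero_lt_one hpy, one_div_pos.mpr (one_pos.trans_le hpx)]
    have hs : 1 ≤ 1 / dist x y := one_le_one_div hd hd1
    have ht : ((1 / dist x y) ^ (p y)⁻¹) ^ p y = 1 / dist x y :=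
      rpow_inv_rpow (by positivity) (by linarith)
    have h := hβ x hx y hy ((1 / dist x y) ^ (p y)⁻¹) (by positivity)
      (by rw [varPow, ht]; exact ofReal_one_div_le_one_div_pow hd hd1 hn)
    rw [varPow, varPow, ht, ENNReal.ofReal_le_ofReal_add_iff_of_ne_top (by positivity)
      ENNReal.one_ne_top, ENNReal.toReal_one] at h
    exact inv_sub_inv_mul_log_le hpx hpy hβ0 hβ1 hs h
  refine ⟨_, by positivity, fun x hx y hy => abs_sub_le_iff.mpr ⟨?_, key x hx y hy⟩⟩
  rw [dist_comm]
  exact key y hy x hx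

lemma isLogVanishingAtOne_of_restrictedVA1With {ω : ℝ → ℝ≥0∞} (hp : ∀ x ∈ Ω, 1 ≤ p x)
    (hω : Tendsto ω (𝓝[>] 0) (𝓝 0)) (hV : RestrictedVA1With Ω (varPow p) 1 ω) :
    IsLogVanishingAtOne Ω p := by
  intro ε hε
  obtain ⟨u, hu, hωu⟩ := mem_nhdsGT_iff_exists_Ioo_subset.mp
    (hω.eventually_lt_const (ENNReal.ofReal_pos.mpr (half_pos hε)))
  refine ⟨min u 1, lt_min hu one_pos, fun y hy hpy x hx hd hdδ => ?_⟩
  have hn : n ≠ 0 := by rintro rfl; exact hd.ne' (by simp [Subsingleton.elim x y])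
  have hd1 : dist x y ≤ 1 := (hdδ.trans_le (min_le_right _ _)).le
  have hωd : ω (dist x y) < ENNReal.ofReal (ε / 2) := hωu ⟨hd, hdδ.trans_le (min_le_left _ _)⟩
  have hωtop : ω (dist x y) ≠ ∞ := (hωd.trans ENNReal.ofReal_lt_top).ne
  have hw : (ω (dist x y)).toReal < ε / 2 := (ENNReal.lt_ofReal_iff_toReal_lt hωtop).mp hωd
  have h := hV x hx y hy (Or.inr ((recession_varPow_lt_top_iff (hp y hy)).mpr hpy))
    (1 / dist x y) (by positivity)
    (by rw [varPow, hpy, rpow_one]; exact ofReal_one_div_le_one_div_pow hd hd1 hn)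
  rw [varPow, varPow, hpy, rpow_one, ENNReal.toReal_inv_one_add hωtop,
    ENNReal.ofReal_le_ofReal_add_iff_of_ne_top (by positivity) hωtop] at h
  have hpx := hp x hx
  rw [abs_of_nonneg (sub_nonneg.2 (div_le_one_of_le₀ hpx (by linarith)))]
  linarith [one_sub_inv_mul_log_le hpx ENNReal.toReal_nonneg (one_le_one_div hd hd1) h]

lemma A1_varPow_of_isLogHolderOn (hp : ∀ x ∈ Ω, 1 ≤ p x)
    (hLH : IsLogHolderOn Ω fun x => 1 / p x) : A1 Ω (varPow p) := by
  obtain ⟨C, hC0, hC⟩ := hLH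
  intro K hK
  have hM : 0 ≤ C * (max (log K) 0 + n) := by positivity
  have hβ1 : exp (-(C * (max (log K) 0 + n))) ≤ 1 := exp_le_one_iff.mpr (by linarith)
  refine ⟨_, exp_pos _, hβ1, fun x hx y hy t ht hφ => ?_⟩
  rw [varPow, varPow, ENNReal.ofReal_le_ofReal_add_iff_of_ne_top (by positivity)
    ENNReal.one_ne_top, ENNReal.toReal_one]
  refine rpow_le_rpow_add_one_of_log_le (exp_pos _) hβ1 ht (hp x hx) fun ht1 => ?_
  have ht0 : 0 < t := by linarith
  rw [log_mul (exp_pos _).ne' ht0.ne', log_exp]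
  suffices (p x - p y) * log t ≤ p x * (C * (max (log K) 0 + n)) by linarith
  rcases eq_or_ne x y with rfl | hxy
  · rw [sub_self, zero_mul]
    exact mul_nonneg (by linarith [hp x hx]) hM
  have hd : 0 < dist x y := dist_pos.mpr hxy
  rw [varPow, ENNReal.ofReal_le_ofReal_div_iff hK.le (pow_pos hd n)] at hφ
  refine sub_mul_le_of_inv_sub_inv_le (hp x hx) (hp y hy) hC0
    (one_pos.trans_le (one_le_log_exp_one_add dist_nonneg))
    ((le_abs_self _).trans ((abs_sub_comm _ _).trans_le (hC x hx y hy))) (log_nonneg ht1.le) ?_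
  calc p y * log t = log (t ^ p y) := (log_rpow ht0 _).symm
    _ ≤ log (K / dist x y ^ n) := log_le_log (by positivity) hφ
    _ ≤ _ := log_div_pow_le hK hd n

lemma IsLogVanishingAtOne.one_sub_inv_max_mul_log_lt (hp : ∀ x ∈ Ω, 1 ≤ p x)
    (h : IsLogVanishingAtOne Ω p) {ε : ℝ} (hε : 0 < ε) :
    ∃ δ > 0, ∀ x ∈ Ω, ∀ y ∈ Ω, (p x = 1 ∨ p y = 1) → 0 < dist x y → dist x y < δ →
      (1 - 1 / max (p x) (p y)) * log (1 / dist x y) < ε := by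
  obtain ⟨δ, hδ, hδε⟩ := h ε hε
  refine ⟨δ, hδ, fun x hx y hy hone hd hdδ => ?_⟩
  rcases hone with h1 | h1
  · have := hδε x hx h1 y hy (dist_comm x y ▸ hd) (dist_comm x y ▸ hdδ)
    rwa [h1, max_eq_right (hp y hy), dist_comm,
      ← abs_of_nonneg (sub_nonneg.2 (div_le_one_of_le₀ (hp y hy) (by linarith [hp y hy])))]
  · have := hδε y hy h1 x hx hd hdδ
    rwa [h1, max_eq_left (hp x hx),
      ← abs_of_nonneg (sub_nonneg.2 (div_le_one_of_le₀ (hp x hx) (by linarith [hp x hx])))]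

-- `1 + w ≥ exp ((q - 1) (1 + |log T|))` dominates both `q` and `T ^ (q - 1)`, which is what
-- the two cases `p x = 1` and `p y = 1` of the (VA1) inequality need (`T = K / dist x y ^ n`).
def va1Defect (p : Euc n → ℝ) (K : ℝ) (x y : Euc n) : ℝ :=
  exp ((max (p x) (p y) - 1) * (1 + |log (K / dist x y ^ n)|)) - 1

lemma IsLogVanishingAtOne.va1Defect_le (hp : ∀ x ∈ Ω, 1 ≤ p x) (h : IsLogVanishingAtOne Ω p)
    {K : ℝ} (hK : 0 < K) {ε : ℝ} (hε : 0 < ε) :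
    ∃ δ > 0, ∀ x ∈ Ω, ∀ y ∈ Ω, (p x = 1 ∨ p y = 1) → 0 < dist x y → dist x y < δ →
      va1Defect p K x y ≤ ε := by
  set c : ℝ := 1 + |log K| + n
  have hc : 1 ≤ c := by have := abs_nonneg (log K); have := n.cast_nonneg (α := ℝ); linarith
  set η := min (1 / 2) (log (1 + ε) / (2 * c))
  have hη : 0 < η := lt_min one_half_pos (div_pos (log_pos (by linarith)) (by positivity))
  obtain ⟨δ, hδ, hδη⟩ := h.one_sub_inv_max_mul_log_lt hp hη
  refine ⟨min δ (exp (-1)), lt_min hδ (exp_pos _), fun x hx y hy hone hd hdδ => ?_⟩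
  have hL : 1 ≤ log (1 / dist x y) := by
    rw [le_log_iff_exp_le (by positivity), le_div_iff₀ hd, ← le_div_iff₀' (exp_pos 1),
      one_div, ← exp_neg]
    exact (hdδ.trans_le (min_le_right _ _)).le
  have hq : 1 ≤ max (p x) (p y) := le_max_of_le_left (hp x hx)
  have hqL := sub_one_mul_le_two_mul hq hL (hδη x hx y hy hone hd (hdδ.trans_le (min_le_left _ _)))
    (min_le_left _ _)
  have hexp : (max (p x) (p y) - 1) * (1 + |log (K / dist x y ^ n)|) ≤ log (1 + ε) :=
    calc _ ≤ (max (p x) (p y) - 1) * (c * log (1 / dist x y)) :=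
          mul_le_mul_of_nonneg_left (one_add_abs_log_div_pow_le hK hd hL n) (by linarith)
      _ = c * ((max (p x) (p y) - 1) * log (1 / dist x y)) := by ring
      _ ≤ c * (2 * η) := by gcongr
      _ ≤ c * (2 * (log (1 + ε) / (2 * c))) := by gcongr; exact min_le_right _ _
      _ = log (1 + ε) := by field_simp
  have := exp_le_exp.mpr hexp
  rw [exp_log (by linarith)] at this
  rw [va1Defect]
  linarith

lemma exists_restrictedVA1With_varPow (hp : ∀ x ∈ Ω, 1 ≤ p x) (h : IsLogVanishingAtOne Ω p)
    {K : ℝ} (hK : 0 < K) : ∃ ω, IsModulus ω ∧ RestrictedVA1With Ω (varPow p) K ω := by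
  set S : Set (Euc n × Euc n) :=
    {z | z.1 ∈ Ω ∧ z.2 ∈ Ω ∧ (p z.1 = 1 ∨ p z.2 = 1) ∧ 0 < dist z.1 z.2}
  set ω : ℝ → ℝ≥0∞ := fun r => ⨆ z ∈ {z ∈ S | dist z.1 z.2 ≤ r},
    ENNReal.ofReal (va1Defect p K z.1 z.2)
  have hmod : IsModulus ω := isModulus_biSup_ofReal S (fun z => dist z.1 z.2)
    (fun z => va1Defect p K z.1 z.2) (fun z hz => hz.2.2.2) fun ε hε => by
      obtain ⟨δ, hδ, hδε⟩ := h.va1Defect_le hp hK hε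
      exact ⟨δ, hδ, fun z ⟨hx, hy, hone, hd⟩ hzδ => hδε _ hx _ hy hone hd hzδ⟩
  refine ⟨ω, hmod, fun x hx y hy hrec t ht hφ => ?_⟩
  rcases eq_or_ne x y with rfl | hxy
  · rw [dist_self, hmod.2.1]
    simp
  have hd : 0 < dist x y := dist_pos.mpr hxy
  have hone : p x = 1 ∨ p y = 1 := hrec.imp (recession_varPow_lt_top_iff (hp x hx)).mp
    (recession_varPow_lt_top_iff (hp y hy)).mp
  have hle : ENNReal.ofReal (va1Defect p K x y) ≤ ω (dist x y) :=
    le_biSup (fun z : Euc n × Euc n => ENNReal.ofReal (va1Defect p K z.1 z.2))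
      (show (x, y) ∈ {z ∈ S | dist z.1 z.2 ≤ dist x y} from ⟨⟨hx, hy, hone, hd⟩, le_rfl⟩)
  rcases eq_or_ne (ω (dist x y)) ∞ with htop | htop
  · rw [htop, add_top]
    exact le_top
  rw [varPow, varPow, ENNReal.toReal_inv_one_add htop,
    ENNReal.ofReal_le_ofReal_add_iff_of_ne_top (by positivity) htop]
  rw [varPow, ENNReal.ofReal_le_ofReal_div_iff hK.le (pow_pos hd n)] at hφ
  exact rpow_mul_inv_one_add_le_of_exp_le (hp x hx) (hp y hy) hone (by positivity) ht hφ
    ((ENNReal.ofReal_le_iff_le_toReal htop).mp hle)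

end VarPow

theorem statement0_general (n : ℕ) (Ω : Set (Euc n))
    (p : Euc n → ℝ) (hp : ∀ x ∈ Ω, 1 ≤ p x) :
    RestrictedVA1 Ω (fun x t => ENNReal.ofReal (t ^ p x)) ↔
      ((∃ C : ℝ, 0 ≤ C ∧ ∀ x ∈ Ω, ∀ y ∈ Ω,
          |1 / p x - 1 / p y| ≤ C / Real.log (Real.exp 1 + 1 / dist x y)) ∧
        (∀ ε : ℝ, 0 < ε → ∃ δ : ℝ, 0 < δ ∧ ∀ y ∈ Ω, p y = 1 → ∀ x ∈ Ω,
          0 < dist x y → dist x y < δ →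
          |1 - 1 / p x| * Real.log (1 / dist x y) < ε)) := by
  constructor
  · rintro ⟨hA1, hVA1⟩
    obtain ⟨ω, hω, hωV⟩ := hVA1 1 one_pos
    exact ⟨isLogHolderOn_inv_of_A1 hp hA1,
      isLogVanishingAtOne_of_restrictedVA1With hp hω.2.2 hωV⟩
  · rintro ⟨hLH, hvan⟩
    exact ⟨A1_varPow_of_isLogHolderOn hp hLH,
      fun K hK => exists_restrictedVA1With_varPow hp hvan hK⟩

/-- For the variable exponent energy `φ(x,t) = t^{p(x)}` with
`p : Ω → [1,∞)`, restricted (VA1) is equivalent to strong log-Hölder continuity of `1/p`. -/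
theorem statement0 (n : ℕ) (Ω : Set (Euc n)) (hΩ : IsBoundedDomain Ω)
    (p : Euc n → ℝ) (hp : ∀ x ∈ Ω, 1 ≤ p x) :
    RestrictedVA1 Ω (fun x t => ENNReal.ofReal (t ^ p x)) ↔
      ((∃ C : ℝ, 0 ≤ C ∧ ∀ x ∈ Ω, ∀ y ∈ Ω,
          |1 / p x - 1 / p y| ≤ C / Real.log (Real.exp 1 + 1 / dist x y)) ∧
        (∀ ε : ℝ, 0 < ε → ∃ δ : ℝ, 0 < δ ∧ ∀ y ∈ Ω, p y = 1 → ∀ x ∈ Ω,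
          0 < dist x y → dist x y < δ →
          |1 - 1 / p x| * Real.log (1 / dist x y) < ε)) :=
  statement0_general n Ω p hp

end
end

section
/- If φ ∈ Φ_w(Ω), then ρ_{V,φ} is a left-continuous semimodular on L¹(Ω): ρ_{V,φ}(0) = 0; λ ↦ ρ_{V,φ}(λu) is increasing on [0,∞) for every u ∈ L¹(Ω); ρ_{V,φ}(−u) = ρ_{V,φ}(u); ρ_{V,φ}(θu + (1−θ)v) ≤ θ ρ_{V,φ}(u) + (1−θ) ρ_{V,φ}(v) for all u,v ∈ L¹(Ω) and θ ∈ [0,1]; and lim_{λ→1⁻} ρ_{V,φ}(λu) = ρ_{V,φ}(u) for every u ∈ L¹(Ω). -/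
open MeasureTheory Filter Set Topology Metric
open scoped ENNReal NNReal

noncomputable section

variable {n : ℕ}

/-! `ρ_{V,φ}` is the supremum, over test fields `w`, of the functionals
`u ↦ (∫ u div w)₊ − ρ_{φ*}(|w|)`. Each of them is convex in `u` and continuous along rays, and
replacing `w` by `c • w` with `|c| ≤ 1` rescales the linear part while not increasing the penalty
`ρ_{φ*}(|w|)`, since `φ*(x, ·)` is increasing. Hence `ρ_{V,φ}` is even, convex, increasing along
rays and, as a supremum of continuous functions, lower semicontinuous along rays; monotonicity and
lower semicontinuity together give left continuity at `λ = 1`. -/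

section DualModular

variable {Ω : Set (Euc n)} {φ : Euc n → ℝ → ℝ≥0∞}

lemma IsTestField.const_smul {w : Euc n → Euc n} (hw : IsTestField Ω w) (c : ℝ) :
    IsTestField Ω (fun x => c • w x) :=
  have hsupp : tsupport (fun x => c • w x) ⊆ tsupport w :=
    tsupport_smul_subset_right (fun _ => c) w
  ⟨hw.1.const_smul c, hw.2.1.mono' (subset_closure.trans hsupp), hsupp.trans hw.2.2⟩

lemma divg_const_smul {w : Euc n → Euc n} (hw : ContDiff ℝ 1 w) (c : ℝ) (x : Euc n) :
    divg (fun y => c • w y) x = c * divg w x := by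
  have hd : DifferentiableAt ℝ w x := (hw.differentiable one_ne_zero).differentiableAt
  simp only [divg, Finset.mul_sum, fderiv_fun_const_smul hd c]
  rfl

lemma continuous_divg {w : Euc n → Euc n} (hw : ContDiff ℝ 1 w) : Continuous (divg w) :=
  continuous_finsetSum _ fun i _ =>
    (EuclideanSpace.proj (𝕜 := ℝ) i).continuous.comp
      ((hw.continuous_fderiv one_ne_zero).clm_apply continuous_const)

lemma support_divg_subset (w : Euc n → Euc n) :
    Function.support (divg w) ⊆ Function.support (fderiv ℝ w) := by
  intro x hx
  contrapose hx
  simp_all [divg]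

lemma HasCompactSupport.divg {w : Euc n → Euc n} (hw : HasCompactSupport w) :
    HasCompactSupport (divg w) :=
  hw.mono' ((support_divg_subset w).trans (support_fderiv_subset ℝ))

lemma integrable_mul_divg {u : Euc n → ℝ} (hu : Integrable u (volume.restrict Ω))
    {w : Euc n → Euc n} (hw : IsTestField Ω w) :
    Integrable (fun x => u x * divg w x) (volume.restrict Ω) :=
  hu.mul_of_top_left ((continuous_divg hw.1).memLp_top_of_hasCompactSupport hw.2.1.divg _)

lemma integral_const_mul_mul_divg (l : ℝ) (u : Euc n → ℝ) (w : Euc n → Euc n) :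
    ∫ x in Ω, l * u x * divg w x = l * ∫ x in Ω, u x * divg w x := by
  simp only [mul_assoc, integral_const_mul]

lemma conj_mono (φ : Euc n → ℝ → ℝ≥0∞) (x : Euc n) : Monotone (conj φ x) :=
  fun _ _ h => iSup_mono fun s =>
    tsub_le_tsub_right (ENNReal.ofReal_le_ofReal (mul_le_mul_of_nonneg_left h s.2)) _

lemma vmodular_conj_mono {w₁ w₂ : Euc n → Euc n} (h : ∀ x, ‖w₁ x‖ ≤ ‖w₂ x‖) :
    vmodular Ω (conj φ) w₁ ≤ vmodular Ω (conj φ) w₂ :=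
  lintegral_mono fun x => conj_mono φ x (h x)

lemma rhoV_le {u : Euc n → ℝ} {X : ℝ≥0∞}
    (h : ∀ w, IsTestField Ω w →
      ENNReal.ofReal (∫ x in Ω, u x * divg w x) - vmodular Ω (conj φ) w ≤ X) :
    rhoV Ω φ u ≤ X :=
  iSup₂_le h

lemma le_rhoV {u : Euc n → ℝ} {w : Euc n → Euc n} (hw : IsTestField Ω w) :
    ENNReal.ofReal (∫ x in Ω, u x * divg w x) - vmodular Ω (conj φ) w ≤ rhoV Ω φ u :=
  le_iSup₂ (f := fun w (_ : IsTestField Ω w) =>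
    ENNReal.ofReal (∫ x in Ω, u x * divg w x) - vmodular Ω (conj φ) w) w hw

lemma rhoV_zero : rhoV Ω φ (fun _ => 0) = 0 :=
  le_antisymm (rhoV_le fun w _ => by simp) bot_le

lemma rhoV_le_rhoV_of {u v : Euc n → ℝ}
    (h : ∀ w, IsTestField Ω w → ∃ w', IsTestField Ω w' ∧
      ∫ x in Ω, u x * divg w x = ∫ x in Ω, v x * divg w' x ∧
      vmodular Ω (conj φ) w' ≤ vmodular Ω (conj φ) w) :
    rhoV Ω φ u ≤ rhoV Ω φ v :=
  rhoV_le fun w hw => by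
    obtain ⟨w', hw', hpair, hpen⟩ := h w hw
    calc ENNReal.ofReal (∫ x in Ω, u x * divg w x) - vmodular Ω (conj φ) w
        ≤ ENNReal.ofReal (∫ x in Ω, v x * divg w' x) - vmodular Ω (conj φ) w' := by
          rw [hpair]; exact tsub_le_tsub_left hpen _
      _ ≤ rhoV Ω φ v := le_rhoV hw'

/-- The field `c • w` tests `u` exactly as `w` tests `c • u`. -/
lemma rhoV_const_mul_le_of_abs_le_one (u : Euc n → ℝ) {c : ℝ} (hc : |c| ≤ 1) :
    rhoV Ω φ (fun x => c * u x) ≤ rhoV Ω φ u :=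
  rhoV_le_rhoV_of fun w hw => ⟨fun x => c • w x, hw.const_smul c, by
    congr 1; funext x; rw [divg_const_smul hw.1]; ring, vmodular_conj_mono fun x => by
    rw [norm_smul, Real.norm_eq_abs]; exact mul_le_of_le_one_left (norm_nonneg _) hc⟩

lemma rhoV_neg (u : Euc n → ℝ) : rhoV Ω φ (fun x => -u x) = rhoV Ω φ u := by
  have key : ∀ v : Euc n → ℝ, rhoV Ω φ (fun x => -v x) ≤ rhoV Ω φ v := fun v => by
    simpa using rhoV_const_mul_le_of_abs_le_one (Ω := Ω) (φ := φ) v (c := -1) (by simp)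
  exact le_antisymm (key u) (by simpa using key fun x => -u x)

lemma rhoV_const_mul_mono (u : Euc n → ℝ) {a b : ℝ} (ha : 0 ≤ a) (hab : a ≤ b) :
    rhoV Ω φ (fun x => a * u x) ≤ rhoV Ω φ (fun x => b * u x) := by
  rcases (ha.trans hab).eq_or_lt with rfl | hb
  · rw [le_antisymm hab ha]
  · have hc : |a / b| ≤ 1 := by
      rw [abs_of_nonneg (div_nonneg ha hb.le)]; exact (div_le_one hb).mpr hab
    simpa only [← mul_assoc, div_mul_cancel₀ a hb.ne'] using
      rhoV_const_mul_le_of_abs_le_one (Ω := Ω) (φ := φ) (fun x => b * u x) hc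

lemma ENNReal.ofReal_convexComb_tsub_le {θ : ℝ} (hθ₀ : 0 ≤ θ) (hθ₁ : θ ≤ 1) (A B : ℝ)
    (M : ℝ≥0∞) :
    ENNReal.ofReal (θ * A + (1 - θ) * B) - M
      ≤ ENNReal.ofReal θ * (ENNReal.ofReal A - M)
        + ENNReal.ofReal (1 - θ) * (ENNReal.ofReal B - M) := by
  have hθ₁' : 0 ≤ 1 - θ := sub_nonneg.mpr hθ₁
  have hM : M = ENNReal.ofReal θ * M + ENNReal.ofReal (1 - θ) * M := by
    rw [← add_mul, ← ENNReal.ofReal_add hθ₀ hθ₁', add_sub_cancel, ENNReal.ofReal_one, one_mul]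
  calc ENNReal.ofReal (θ * A + (1 - θ) * B) - M
      ≤ (ENNReal.ofReal θ * ENNReal.ofReal A + ENNReal.ofReal (1 - θ) * ENNReal.ofReal B)
          - (ENNReal.ofReal θ * M + ENNReal.ofReal (1 - θ) * M) := by
        rw [← hM, ← ENNReal.ofReal_mul hθ₀, ← ENNReal.ofReal_mul hθ₁']
        exact tsub_le_tsub_right ENNReal.ofReal_add_le M
    _ ≤ _ := by
        rw [ENNReal.mul_sub fun _ _ => ENNReal.ofReal_ne_top,
          ENNReal.mul_sub fun _ _ => ENNReal.ofReal_ne_top]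
        exact add_tsub_add_le_tsub_add_tsub

lemma rhoV_convexComb_le {u v : Euc n → ℝ} (hu : Integrable u (volume.restrict Ω))
    (hv : Integrable v (volume.restrict Ω)) {θ : ℝ} (hθ₀ : 0 ≤ θ) (hθ₁ : θ ≤ 1) :
    rhoV Ω φ (fun x => θ * u x + (1 - θ) * v x)
      ≤ ENNReal.ofReal θ * rhoV Ω φ u + ENNReal.ofReal (1 - θ) * rhoV Ω φ v :=
  rhoV_le fun w hw => by
    have hpair : ∫ x in Ω, (θ * u x + (1 - θ) * v x) * divg w x
        = θ * (∫ x in Ω, u x * divg w x) + (1 - θ) * ∫ x in Ω, v x * divg w x := by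
      simp only [add_mul]
      rw [integral_add ((integrable_mul_divg hu hw).const_mul θ |>.congr
          (.of_forall fun _ => (mul_assoc _ _ _).symm))
          ((integrable_mul_divg hv hw).const_mul (1 - θ) |>.congr
          (.of_forall fun _ => (mul_assoc _ _ _).symm)),
        integral_const_mul_mul_divg, integral_const_mul_mul_divg]
    rw [hpair]
    exact (ENNReal.ofReal_convexComb_tsub_le hθ₀ hθ₁ _ _ _).trans
      (add_le_add (mul_le_mul_right (le_rhoV hw) _) (mul_le_mul_right (le_rhoV hw) _))

lemma lowerSemicontinuous_rhoV_const_mul (u : Euc n → ℝ) :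
    LowerSemicontinuous fun l : ℝ => rhoV Ω φ (fun x => l * u x) := by
  simp only [rhoV, integral_const_mul_mul_divg]
  exact lowerSemicontinuous_biSup fun w _ =>
    ((ENNReal.continuous_sub_right _).comp
      (ENNReal.continuous_ofReal.comp (continuous_mul_const _))).lowerSemicontinuous

lemma tendsto_rhoV_const_mul_nhdsLT_one (u : Euc n → ℝ) :
    Tendsto (fun l : ℝ => rhoV Ω φ (fun x => l * u x)) (𝓝[<] 1) (𝓝 (rhoV Ω φ u)) := by
  have hlsc := (lowerSemicontinuous_rhoV_const_mul (Ω := Ω) (φ := φ) u).lowerSemicontinuousAt 1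
  refine tendsto_order.mpr
    ⟨fun a ha => nhdsWithin_le_nhds (hlsc a (by simpa only [one_mul] using ha)), fun b hb => ?_⟩
  filter_upwards [Ioo_mem_nhdsLT zero_lt_one] with l hl
  calc rhoV Ω φ (fun x => l * u x) ≤ rhoV Ω φ (fun x => 1 * u x) :=
        rhoV_const_mul_mono u hl.1.le hl.2.le
    _ = rhoV Ω φ u := by simp only [one_mul]
    _ < b := hb

end DualModular

theorem statement5_general (n : ℕ) (Ω : Set (Euc n))
    (φ : Euc n → ℝ → ℝ≥0∞) :
    rhoV Ω φ (fun _ => 0) = 0 ∧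
    (∀ u : Euc n → ℝ, Integrable u (volume.restrict Ω) →
      ∀ a b : ℝ, 0 ≤ a → a ≤ b →
        rhoV Ω φ (fun x => a * u x) ≤ rhoV Ω φ (fun x => b * u x)) ∧
    (∀ u : Euc n → ℝ, Integrable u (volume.restrict Ω) →
      rhoV Ω φ (fun x => -u x) = rhoV Ω φ u) ∧
    (∀ u v : Euc n → ℝ, Integrable u (volume.restrict Ω) →
      Integrable v (volume.restrict Ω) → ∀ θ : ℝ, θ ∈ Icc (0 : ℝ) 1 →
        rhoV Ω φ (fun x => θ * u x + (1 - θ) * v x)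
          ≤ ENNReal.ofReal θ * rhoV Ω φ u + ENNReal.ofReal (1 - θ) * rhoV Ω φ v) ∧
    (∀ u : Euc n → ℝ, Integrable u (volume.restrict Ω) →
      Tendsto (fun l : ℝ => rhoV Ω φ (fun x => l * u x)) (𝓝[<] (1 : ℝ))
        (𝓝 (rhoV Ω φ u))) :=
  ⟨rhoV_zero,
    fun u _ _ _ ha hab => rhoV_const_mul_mono u ha hab,
    fun u _ => rhoV_neg u,
    fun _ _ hu hv _ hθ => rhoV_convexComb_le hu hv hθ.1 hθ.2,
    fun u _ => tendsto_rhoV_const_mul_nhdsLT_one u⟩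

/-- If `φ ∈ Φ_w(Ω)`, then `ρ_{V,φ}` is a left-continuous semimodular
on `L¹(Ω)`. -/
theorem statement5 (n : ℕ) (Ω : Set (Euc n)) (hΩ : IsBoundedDomain Ω)
    (φ : Euc n → ℝ → ℝ≥0∞) (hφ : IsWeakPhi Ω φ) :
    rhoV Ω φ (fun _ => 0) = 0 ∧
    (∀ u : Euc n → ℝ, Integrable u (volume.restrict Ω) →
      ∀ a b : ℝ, 0 ≤ a → a ≤ b →
        rhoV Ω φ (fun x => a * u x) ≤ rhoV Ω φ (fun x => b * u x)) ∧
    (∀ u : Euc n → ℝ, Integrable u (volume.restrict Ω) →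
      rhoV Ω φ (fun x => -u x) = rhoV Ω φ u) ∧
    (∀ u v : Euc n → ℝ, Integrable u (volume.restrict Ω) →
      Integrable v (volume.restrict Ω) → ∀ θ : ℝ, θ ∈ Icc (0 : ℝ) 1 →
        rhoV Ω φ (fun x => θ * u x + (1 - θ) * v x)
          ≤ ENNReal.ofReal θ * rhoV Ω φ u + ENNReal.ofReal (1 - θ) * rhoV Ω φ v) ∧
    (∀ u : Euc n → ℝ, Integrable u (volume.restrict Ω) →
      Tendsto (fun l : ℝ => rhoV Ω φ (fun x => l * u x)) (𝓝[<] (1 : ℝ))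
        (𝓝 (rhoV Ω φ u))) :=
  statement5_general n Ω φ

end
end

section
/- Let φ ∈ Φ_c(Ω) satisfy restricted (VA1). If w ∈ C(Ω) with ρ_{φ*}(w) < ∞, then |w(x)| ≤ φ'_∞(x) for every x ∈ Ω. -/
open MeasureTheory Filter Set Topology Metric
open scoped ENNReal NNReal

noncomputable section

variable {n : ℕ}

/-
If `|w(x₀)| > φ'_∞(x₀)`, then for large `t` we have `φ(x₀, t) ≤ c t` with `c < |w(x₀)|`.
Taking `t ≈ |y - x₀|⁻ⁿ`, the (VA1) inequality, which applies because `φ'_∞(x₀) < ∞`, transfers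
this bound to points `y` near `x₀`, and Young's inequality then gives
`φ*(y, |w(y)|) ≳ |y - x₀|⁻ⁿ`. This is not integrable near `x₀`, so `ρ_{φ*}(w) = ∞`.
-/

section HaarInvPow

variable {E : Type*} [NormedAddCommGroup E] [NormedSpace ℝ E] [FiniteDimensional ℝ E]
  [MeasurableSpace E] [BorelSpace E] [Nontrivial E] (μ : Measure E) [μ.IsAddHaarMeasure]

theorem not_integrableOn_ball_inv_norm_pow_finrank {r : ℝ} (hr : 0 < r) :
    ¬ IntegrableOn (fun x : E ↦ (‖x‖ ^ Module.finrank ℝ E)⁻¹) (ball 0 r) μ := by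
  rw [integrableOn_fun_norm_addHaar μ (f := fun y ↦ (y ^ Module.finrank ℝ E)⁻¹)]
  have hdim : Module.finrank ℝ E ≠ 0 := Module.finrank_pos.ne'
  have hcongr : EqOn (fun y : ℝ ↦ y ^ (-1 : ℝ))
      (fun y ↦ y ^ (Module.finrank ℝ E - 1) • (y ^ Module.finrank ℝ E)⁻¹) (Ioo 0 r) := by
    intro y ⟨hy, _⟩
    simp only [smul_eq_mul, Real.rpow_neg_one, ← pow_sub_one_mul hdim y]
    field_simp
  rw [← integrableOn_congr_fun hcongr measurableSet_Ioo,
    intervalIntegral.integrableOn_Ioo_rpow_iff hr]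
  exact lt_irrefl _

theorem setLIntegral_ball_inv_dist_pow_finrank_eq_top (x₀ : E) {r : ℝ} (hr : 0 < r) :
    ∫⁻ x in ball x₀ r, ENNReal.ofReal (dist x x₀ ^ Module.finrank ℝ E)⁻¹ ∂μ = ∞ := by
  rw [← (measurePreserving_add_right μ x₀).setLIntegral_comp_preimage_emb
    (Homeomorph.addRight x₀).measurableEmbedding]
  simp only [dist_eq_norm, add_sub_cancel_right, preimage_add_right_ball, sub_self]
  have hmeas : AEStronglyMeasurable (fun x : E ↦ (‖x‖ ^ Module.finrank ℝ E)⁻¹)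
      (μ.restrict (ball 0 r)) := by fun_prop
  rw [← not_ne_iff,
    lintegral_ofReal_ne_top_iff_integrable hmeas (.of_forall fun x ↦ by positivity)]
  exact not_integrableOn_ball_inv_norm_pow_finrank μ hr

theorem setLIntegral_eq_top_of_eventually_inv_dist_pow_finrank_le {f : E → ℝ≥0∞} {s : Set E}
    {x₀ : E} (hs : s ∈ 𝓝 x₀) {A : ℝ} (hA : 0 < A)
    (hf : ∀ᶠ x in 𝓝[≠] x₀, ENNReal.ofReal (A * (dist x x₀ ^ Module.finrank ℝ E)⁻¹) ≤ f x) :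
    ∫⁻ x in s, f x ∂μ = ∞ := by
  obtain ⟨r, hr, hball⟩ := Metric.eventually_nhds_iff_ball.1
    (inter_mem hs (eventually_nhdsWithin_iff.1 hf))
  have hae : ∀ᵐ x ∂μ.restrict (ball x₀ r),
      ENNReal.ofReal (A * (dist x x₀ ^ Module.finrank ℝ E)⁻¹) ≤ f x := by
    filter_upwards [ae_restrict_mem measurableSet_ball,
      ae_restrict_of_ae (compl_mem_ae_iff.2 (measure_singleton x₀))] with x hx hne
    exact (hball x hx).2 hne
  refine top_unique ?_
  calc ∞ = ENNReal.ofReal A *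
        ∫⁻ x in ball x₀ r, ENNReal.ofReal (dist x x₀ ^ Module.finrank ℝ E)⁻¹ ∂μ := by
        rw [setLIntegral_ball_inv_dist_pow_finrank_eq_top μ x₀ hr,
          ENNReal.mul_top (ENNReal.ofReal_pos.2 hA).ne']
    _ = ∫⁻ x in ball x₀ r, ENNReal.ofReal (A * (dist x x₀ ^ Module.finrank ℝ E)⁻¹) ∂μ := by
        rw [← lintegral_const_mul' _ _ ENNReal.ofReal_ne_top]
        simp only [ENNReal.ofReal_mul hA.le]
    _ ≤ ∫⁻ x in ball x₀ r, f x ∂μ := lintegral_mono_ae hae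
    _ ≤ ∫⁻ x in s, f x ∂μ := lintegral_mono_set fun x hx ↦ (hball x hx).1

end HaarInvPow

section Conjugate

variable {φ : Euc n → ℝ → ℝ≥0∞} {x : Euc n}

theorem ofReal_mul_sub_le_conj {s t b : ℝ} (hs : 0 ≤ s) (hb : 0 ≤ b)
    (hφ : φ x s ≤ ENNReal.ofReal b) : ENNReal.ofReal (s * t - b) ≤ conj φ x t :=
  calc ENNReal.ofReal (s * t - b) = ENNReal.ofReal (s * t) - ENNReal.ofReal b :=
        ENNReal.ofReal_sub _ hb
    _ ≤ ENNReal.ofReal (s * t) - φ x s := tsub_le_tsub_left hφ _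
    _ ≤ conj φ x t := le_iSup (fun σ : {σ : ℝ // 0 ≤ σ} ↦
        ENNReal.ofReal (σ * t) - φ x σ) ⟨s, hs⟩

theorem eventually_le_mul_of_recession_lt {c : ℝ} (h : recession φ x < ENNReal.ofReal c) :
    ∀ᶠ t in atTop, φ x t ≤ ENNReal.ofReal (c * t) := by
  have hc : 0 ≤ c := (ENNReal.ofReal_pos.1 (zero_le.trans_lt h)).le
  filter_upwards [eventually_lt_of_limsup_lt h, eventually_gt_atTop 0] with t ht ht0
  rw [ENNReal.div_lt_iff (.inl (ENNReal.ofReal_pos.2 ht0).ne') (.inl ENNReal.ofReal_ne_top),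
    ← ENNReal.ofReal_mul hc] at ht
  exact ht.le

theorem conj_eq_top_of_recession_lt {t : ℝ} (h : recession φ x < ENNReal.ofReal t) :
    conj φ x t = ∞ := by
  obtain ⟨c, hc, hrc, hct⟩ := ENNReal.lt_iff_exists_real_btwn.1 h
  have hct : c < t := (ENNReal.ofReal_lt_ofReal_iff'.1 hct).1
  refine top_unique (le_of_tendsto (f := fun s ↦ ENNReal.ofReal ((t - c) * s))
    (ENNReal.tendsto_ofReal_atTop.comp (tendsto_id.const_mul_atTop (sub_pos.2 hct))) ?_)
  filter_upwards [eventually_le_mul_of_recession_lt hrc, eventually_ge_atTop 0] with s hs hs0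
  calc ENNReal.ofReal ((t - c) * s) = ENNReal.ofReal (s * t - c * s) := by congr 1; ring
    _ ≤ conj φ x t := ofReal_mul_sub_le_conj hs0 (by positivity) hs

theorem inv_one_add_le_toReal_inv_one_add {ω : ℝ≥0∞} {η : ℝ} (hη : 0 ≤ η) (h : ω ≤ ENNReal.ofReal η) :
    (1 + η)⁻¹ ≤ ((1 + ω)⁻¹).toReal := by
  have hω : ω ≠ ∞ := ne_top_of_le_ne_top ENNReal.ofReal_ne_top h
  rw [ENNReal.toReal_inv, ENNReal.toReal_add ENNReal.one_ne_top hω, ENNReal.toReal_one]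
  gcongr
  exact ENNReal.toReal_le_of_le_ofReal hη h

/-- One step of the (VA1) inequality from `y` to `x`, combined with Young's inequality. -/
theorem ofReal_le_conj_of_va1 {y : Euc n} {ω : ℝ≥0∞} {b c η t v : ℝ} (hb : 0 ≤ b) (hc : 0 ≤ c)
    (hη : 0 ≤ η) (ht : 0 ≤ t) (hωη : ω ≤ ENNReal.ofReal η)
    (hφy : φ y t ≤ ENNReal.ofReal (c * t))
    (hva : φ x (t * ((1 + ω)⁻¹).toReal) ≤ φ y t + ω) (hv : b * (1 + η) ≤ v) :
    ENNReal.ofReal ((b - c) * t - η) ≤ conj φ x v := by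
  set s := t * ((1 + ω)⁻¹).toReal
  have hs : t * (1 + η)⁻¹ ≤ s := mul_le_mul_of_nonneg_left (inv_one_add_le_toReal_inv_one_add hη hωη) ht
  have hsv : b * t ≤ s * v :=
    calc b * t = t * (1 + η)⁻¹ * (b * (1 + η)) := by field_simp
      _ ≤ s * v := mul_le_mul hs hv (by positivity) (by positivity)
  have hφx : φ x s ≤ ENNReal.ofReal (c * t + η) := by
    rw [ENNReal.ofReal_add (by positivity) hη]
    exact hva.trans (add_le_add hφy hωη)
  exact (ENNReal.ofReal_le_ofReal (by linarith)).trans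
    (ofReal_mul_sub_le_conj (by positivity) (by positivity) hφx)

end Conjugate

/-- The choice `t = (c |y - x₀|ⁿ)⁻¹` makes the (VA1) hypothesis `φ(x₀, t) ≤ 1 / |y - x₀|ⁿ` hold
as soon as `φ(x₀, t) ≤ c t`. -/
theorem eventually_le_conj_of_recession_lt {Ω : Set (Euc n)} {φ : Euc n → ℝ → ℝ≥0∞}
    {x₀ : Euc n} {g : Euc n → ℝ} (hn : 0 < n) (hΩ : Ω ∈ 𝓝 x₀) (hva : RestrictedVA1 Ω φ)
    (hg : ContinuousAt g x₀) (hrec : recession φ x₀ < ENNReal.ofReal (g x₀)) :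
    ∃ A > 0, ∀ᶠ y in 𝓝[≠] x₀, ENNReal.ofReal (A * (dist y x₀ ^ n)⁻¹) ≤ conj φ y (g y) := by
  obtain ⟨c, -, hrc, hcg⟩ := ENNReal.lt_iff_exists_real_btwn.1 hrec
  have hc : 0 < c := ENNReal.ofReal_pos.1 (zero_le.trans_lt hrc)
  obtain ⟨b, hcb, hbg⟩ := exists_between (ENNReal.ofReal_lt_ofReal_iff'.1 hcg).1
  have hb : 0 < b := hc.trans hcb
  set η := (g x₀ - b) / (2 * b)
  have hη : 0 < η := div_pos (by linarith) (by positivity)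
  have hbη : b * (1 + η) < g x₀ := by
    have : b * (1 + η) = (b + g x₀) / 2 := by simp only [η]; field_simp; ring
    linarith
  obtain ⟨ω, ⟨-, -, hω⟩, hvaω⟩ := hva.2 1 one_pos
  have hdist : Tendsto (fun y ↦ dist y x₀) (𝓝[≠] x₀) (𝓝[>] 0) := by
    simpa only [dist_eq_norm] using tendsto_norm_sub_self_nhdsNE x₀
  have hpow : Tendsto (fun d : ℝ ↦ c * d ^ n) (𝓝[>] 0) (𝓝[>] 0) := by
    refine tendsto_nhdsWithin_iff.2 ⟨?_, eventually_nhdsWithin_of_forall fun d hd ↦ ?_⟩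
    · have := ((continuous_pow n).const_mul c).tendsto' 0 0 (by simp [hn.ne'])
      exact this.mono_left nhdsWithin_le_nhds
    · exact mul_pos hc (pow_pos hd n)
  set t := fun y ↦ (c * dist y x₀ ^ n)⁻¹
  have ht : Tendsto t (𝓝[≠] x₀) atTop := tendsto_inv_nhdsGT_zero.comp (hpow.comp hdist)
  obtain ⟨T, hT⟩ := eventually_atTop.1 (eventually_le_mul_of_recession_lt hrc)
  refine ⟨(b - c) / (2 * c), div_pos (by linarith) (by linarith), ?_⟩
  filter_upwards [nhdsWithin_le_nhds hΩ, nhdsWithin_le_nhds (hg.eventually (lt_mem_nhds hbη)),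
    hdist.eventually (hω.eventually (gt_mem_nhds (ENNReal.ofReal_pos.2 hη))),
    hdist self_mem_nhdsWithin, ht.eventually_ge_atTop T,
    ht.eventually_ge_atTop (2 * η / (b - c))] with y hyΩ hgy hωy hdy htT htη
  have hdn : 0 < dist y x₀ ^ n := pow_pos hdy n
  have hφ := hT _ htT
  have hK : φ x₀ (t y) ≤ ENNReal.ofReal 1 / ENNReal.ofReal (dist y x₀ ^ n) := by
    rw [← ENNReal.ofReal_div_of_pos hdn]
    convert hφ using 2
    simp only [t]
    field_simp
  have hVA := hvaω y hyΩ x₀ (mem_of_mem_nhds hΩ) (.inr (hrc.trans ENNReal.ofReal_lt_top)) (t y)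
    (by positivity) hK
  refine (ENNReal.ofReal_le_ofReal ?_).trans
    (ofReal_le_conj_of_va1 hb.le hc.le hη.le (by positivity) hωy.le hφ hVA hgy.le)
  rw [div_le_iff₀ (by linarith)] at htη
  have : (b - c) / (2 * c) * (dist y x₀ ^ n)⁻¹ = (b - c) * t y / 2 := by
    simp only [t]; field_simp
  linarith

theorem statement12_general (n : ℕ) (Ω : Set (Euc n)) (hΩ : IsBoundedDomain Ω)
    (φ : Euc n → ℝ → ℝ≥0∞) (hva : RestrictedVA1 Ω φ)
    (w : Euc n → ℝ) (hw : ContinuousOn w Ω)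
    (hρ : modular Ω (conj φ) w < ∞) :
    ∀ x ∈ Ω, ENNReal.ofReal |w x| ≤ recession φ x := by
  intro x₀ hx₀
  by_contra! hlt
  have hΩx₀ : Ω ∈ 𝓝 x₀ := hΩ.1.mem_nhds hx₀
  refine hρ.ne ?_
  rcases Nat.eq_zero_or_pos n with rfl | hn
  · -- `Euc 0` is a single point of positive measure, where `φ*(x₀, |w x₀|) = ∞`.
    have hvol : volume {x₀} ≠ 0 := by
      rw [Subsingleton.eq_univ_of_nonempty (singleton_nonempty x₀)]
      exact Measure.measure_univ_ne_zero.2 (NeZero.ne volume)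
    refine top_unique ?_
    calc ∞ = ∫⁻ x in {x₀}, conj φ x |w x| := by
          rw [lintegral_singleton, conj_eq_top_of_recession_lt hlt, ENNReal.top_mul hvol]
      _ ≤ modular Ω (conj φ) w := lintegral_mono_set (singleton_subset_iff.2 hx₀)
  · have : Nonempty (Fin n) := ⟨⟨0, hn⟩⟩
    obtain ⟨A, hA, hconj⟩ :=
      eventually_le_conj_of_recession_lt hn hΩx₀ hva (hw.continuousAt hΩx₀).abs hlt
    exact setLIntegral_eq_top_of_eventually_inv_dist_pow_finrank_le volume hΩx₀ hA
      (by simpa only [finrank_euclideanSpace_fin] using hconj)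

/-- If `φ ∈ Φ_c(Ω)` satisfies restricted (VA1) and `w ∈ C(Ω)` with
`ρ_{φ*}(w) < ∞`, then `|w| ≤ φ'_∞` everywhere in `Ω`. -/
theorem statement12 (n : ℕ) (Ω : Set (Euc n)) (hΩ : IsBoundedDomain Ω)
    (φ : Euc n → ℝ → ℝ≥0∞) (hφ : IsConvexPhi Ω φ) (hva : RestrictedVA1 Ω φ)
    (w : Euc n → ℝ) (hw : ContinuousOn w Ω)
    (hρ : modular Ω (conj φ) w < ∞) :
    ∀ x ∈ Ω, ENNReal.ofReal |w x| ≤ recession φ x :=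
  statement12_general n Ω hΩ φ hva w hw hρ

end
end
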